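/- arXiv:2508.11560 — 2 statements merged into one kernel-verified Lean document; each statement's English description precedes it below -/
import Mathlib

section
/- Let A ∈ ℝ^{m×n} and B ∈ ℝ^{n×p} with A*B = 0. Then ℝ^n decomposes as the internal direct sum of the image of Aᵀ, the kernel of AᵀA + BBᵀ, and the image of B. -/
/-!
Via the dot product, `range Aᵀ` is the orthogonal complement of `ker A` and `range B` that of
`ker Bᵀ`; moreover `AᵀA + BBᵀ` is the Gram matrix of the stacked matrix `[A; Bᵀ]`, so its kernel
is `ker A ∩ ker Bᵀ`. Since `AB = 0` gives `range B ⊆ ker A`, the three subspaces are pairwise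
orthogonal, and a vector orthogonal to all of them lies in `ker A ∩ ker Bᵀ` and is orthogonal to
itself, hence zero.
-/

open Matrix

theorem DirectSum.isInternal_map_linearEquiv_iff {ι R M N : Type*} [DecidableEq ι] [Ring R]
    [AddCommGroup M] [Module R M] [AddCommGroup N] [Module R N] (e : M ≃ₗ[R] N)
    (K : ι → Submodule R M) :
    DirectSum.IsInternal (fun i => (K i).map e.toLinearMap) ↔ DirectSum.IsInternal K := by
  simp only [DirectSum.isInternal_submodule_iff_iSupIndep_and_iSup_eq_top]
  have hmap : ∀ U : Submodule R M, U.map e.toLinearMap = Submodule.orderIsoMapComap e U :=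
    fun _ => rfl
  simp only [hmap]
  rw [← (Submodule.orderIsoMapComap e).map_iSup, map_eq_top_iff]
  exact and_congr_left' (iSupIndep_map_orderIso_iff (Submodule.orderIsoMapComap e))

theorem isInternal_of_pairwise_dotProduct_eq_zero {ι n : Type*} [DecidableEq ι] [Fintype n]
    (K : ι → Submodule ℝ (n → ℝ))
    (horth : Pairwise fun i j => ∀ u ∈ K i, ∀ v ∈ K j, u ⬝ᵥ v = 0)
    (htotal : ∀ x : n → ℝ, (∀ i, ∀ u ∈ K i, u ⬝ᵥ x = 0) → x = 0) :
    DirectSum.IsInternal K := by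
  let e := (WithLp.linearEquiv 2 ℝ (n → ℝ)).symm
  have he : ∀ u v : n → ℝ, inner ℝ (e u) (e v) = u ⬝ᵥ v := fun u v => by
    simp [e, EuclideanSpace.inner_eq_star_dotProduct, dotProduct_comm]
  rw [← DirectSum.isInternal_map_linearEquiv_iff e]
  have hfamily : OrthogonalFamily ℝ (fun i => (K i).map e.toLinearMap)
      fun i => ((K i).map e.toLinearMap).subtypeₗᵢ := by
    rintro i j hij ⟨_, u, hu, rfl⟩ ⟨_, v, hv, rfl⟩
    exact (he u v).trans (horth hij u hu v hv)
  rw [hfamily.isInternal_iff, Submodule.eq_bot_iff]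
  intro x hx
  have : e.symm x = 0 := htotal _ fun i u hu => by
    rw [← he, e.apply_symm_apply]
    exact hx _ (Submodule.mem_iSup_of_mem i ⟨u, hu, rfl⟩)
  simpa using this

namespace Matrix

variable {m n p R : Type*} [Fintype m] [Fintype n] [Fintype p]

theorem mem_ker_mulVecLin_iff_forall_mem_range_transpose [CommRing R] [LinearOrder R]
    [IsStrictOrderedRing R] (M : Matrix m n R) (x : n → R) :
    x ∈ LinearMap.ker M.mulVecLin ↔ ∀ u ∈ LinearMap.range Mᵀ.mulVecLin, u ⬝ᵥ x = 0 := by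
  simp only [LinearMap.mem_ker, LinearMap.mem_range, mulVecLin_apply, forall_exists_index,
    forall_apply_eq_imp_iff, dotProduct_comm _ x, dotProduct_transpose_mulVec]
  exact ⟨fun h w => by rw [h, dotProduct_zero], fun h => dotProduct_self_eq_zero.mp (h _)⟩

theorem ker_mulVecLin_transpose_mul_add_mul_transpose [Field R] [LinearOrder R]
    [IsStrictOrderedRing R] (A : Matrix m n R) (B : Matrix n p R) :
    LinearMap.ker (Aᵀ * A + B * Bᵀ).mulVecLin =
      LinearMap.ker A.mulVecLin ⊓ LinearMap.ker Bᵀ.mulVecLin := by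
  have hgram : Aᵀ * A + B * Bᵀ = (fromRows A Bᵀ)ᵀ * fromRows A Bᵀ := by
    rw [transpose_fromRows, fromCols_mul_fromRows, transpose_transpose]
  ext x
  simp only [hgram, ker_mulVecLin_transpose_mul_self, Submodule.mem_inf, LinearMap.mem_ker,
    mulVecLin_apply, fromRows_mulVec]
  rw [← Sum.elim_zero_zero, Sum.elim_eq_iff]

end Matrix

theorem stmt_1 (m n p : ℕ) (A : Matrix (Fin m) (Fin n) ℝ) (B : Matrix (Fin n) (Fin p) ℝ)
    (hAB : A * B = 0) :
    DirectSum.IsInternal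
      (![LinearMap.range (Aᵀ).mulVecLin,
        LinearMap.ker (Aᵀ * A + B * Bᵀ).mulVecLin,
        LinearMap.range B.mulVecLin] : Fin 3 → Submodule ℝ (Fin n → ℝ)) := by
  have hrange : LinearMap.range B.mulVecLin ≤ LinearMap.ker A.mulVecLin :=
    LinearMap.range_le_ker_iff.mpr (by rw [← mulVecLin_mul, hAB, mulVecLin_zero])
  have hA := mem_ker_mulVecLin_iff_forall_mem_range_transpose A
  have hB := transpose_transpose B ▸ mem_ker_mulVecLin_iff_forall_mem_range_transpose Bᵀ
  rw [ker_mulVecLin_transpose_mul_add_mul_transpose]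
  refine isInternal_of_pairwise_dotProduct_eq_zero _ ?_ fun x hx => ?_
  · have ortho_comm {U V : Submodule ℝ (Fin n → ℝ)} (h : ∀ u ∈ U, ∀ v ∈ V, u ⬝ᵥ v = 0) :
        ∀ v ∈ V, ∀ u ∈ U, v ⬝ᵥ u = 0 :=
      fun v hv u hu => dotProduct_comm u v ▸ h u hu v hv
    have h01 : ∀ u ∈ LinearMap.range Aᵀ.mulVecLin,
        ∀ v ∈ LinearMap.ker A.mulVecLin ⊓ LinearMap.ker Bᵀ.mulVecLin, u ⬝ᵥ v = 0 :=
      fun u hu v hv => (hA v).1 hv.1 u hu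
    have h02 : ∀ u ∈ LinearMap.range Aᵀ.mulVecLin, ∀ v ∈ LinearMap.range B.mulVecLin, u ⬝ᵥ v = 0 :=
      fun u hu v hv => (hA v).1 (hrange hv) u hu
    have h12 : ∀ u ∈ LinearMap.ker A.mulVecLin ⊓ LinearMap.ker Bᵀ.mulVecLin,
        ∀ v ∈ LinearMap.range B.mulVecLin, u ⬝ᵥ v = 0 :=
      ortho_comm fun v hv u hu => (hB u).1 hu.2 v hv
    intro i j hij
    fin_cases i <;> fin_cases j <;>
      first
        | exact absurd rfl hij
        | exact h01 | exact h02 | exact h12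
        | exact ortho_comm h01 | exact ortho_comm h02 | exact ortho_comm h12
  · exact dotProduct_self_eq_zero.mp (hx 1 x ⟨(hA x).2 (hx 0), (hB x).2 (hx 2)⟩)
end

section
/- Let A ∈ ℝ^{m×n} and B ∈ ℝ^{n×p} with A*B = 0. Then the kernel of AᵀA + BBᵀ is isomorphic (as a real vector space) to the quotient ker A / range B. -/
open Matrix

set_option maxHeartbeats 1000000 in
set_option synthInstance.maxHeartbeats 200000 in
theorem stmt_3 (m n p : ℕ) (A : Matrix (Fin m) (Fin n) ℝ) (B : Matrix (Fin n) (Fin p) ℝ)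
    (hAB : A * B = 0) :
    Nonempty
      ((LinearMap.ker (Aᵀ * A + B * Bᵀ).mulVecLin) ≃ₗ[ℝ]
        ((LinearMap.ker A.mulVecLin) ⧸
          Submodule.comap (LinearMap.ker A.mulVecLin).subtype
            (LinearMap.range B.mulVecLin))) := by
  classical
  set KA := LinearMap.ker A.mulVecLin with hKA
  set KB := LinearMap.ker Bᵀ.mulVecLin with hKB
  set RB := LinearMap.range B.mulVecLin with hRB
  -- range B ≤ ker A
  have hle : RB ≤ KA := by
    rintro x ⟨y, rfl⟩
    simp only [hKA, LinearMap.mem_ker, mulVecLin_apply, mulVec_mulVec, hAB, zero_mulVec]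
  -- kernel of AᵀA + BBᵀ is ker A ⊓ ker Bᵀ
  have hker : LinearMap.ker (Aᵀ * A + B * Bᵀ).mulVecLin = KA ⊓ KB := by
    ext x
    simp only [LinearMap.mem_ker, Submodule.mem_inf, mulVecLin_apply, hKA, hKB]
    constructor
    · intro h
      rw [add_mulVec, ← mulVec_mulVec, ← mulVec_mulVec] at h
      have e1 : x ⬝ᵥ (Aᵀ *ᵥ (A *ᵥ x)) = (A *ᵥ x) ⬝ᵥ (A *ᵥ x) := by
        rw [dotProduct_mulVec, vecMul_transpose]
      have e2 : x ⬝ᵥ (B *ᵥ (Bᵀ *ᵥ x)) = (Bᵀ *ᵥ x) ⬝ᵥ (Bᵀ *ᵥ x) := by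
        rw [dotProduct_mulVec, ← mulVec_transpose]
      have h2 := congr_arg (fun v => x ⬝ᵥ v) h
      simp only [dotProduct_add, dotProduct_zero, e1, e2] at h2
      have ha : (0:ℝ) ≤ (A *ᵥ x) ⬝ᵥ (A *ᵥ x) := by
        apply Finset.sum_nonneg; intro i _; exact mul_self_nonneg _
      have hb : (0:ℝ) ≤ (Bᵀ *ᵥ x) ⬝ᵥ (Bᵀ *ᵥ x) := by
        apply Finset.sum_nonneg; intro i _; exact mul_self_nonneg _
      have ha0 : (A *ᵥ x) ⬝ᵥ (A *ᵥ x) = 0 := by linarith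
      have hb0 : (Bᵀ *ᵥ x) ⬝ᵥ (Bᵀ *ᵥ x) = 0 := by linarith
      exact ⟨dotProduct_self_eq_zero.mp ha0, dotProduct_self_eq_zero.mp hb0⟩
    · rintro ⟨h1, h2⟩
      rw [add_mulVec, ← mulVec_mulVec, ← mulVec_mulVec, h1, h2, mulVec_zero, mulVec_zero,
        add_zero]
  -- range B ⊓ ker Bᵀ = ⊥
  have hdisj : RB ⊓ KB = ⊥ := by
    rw [Submodule.eq_bot_iff]
    rintro x ⟨⟨y, rfl⟩, hx⟩
    have hx' : Bᵀ *ᵥ (B *ᵥ y) = 0 := hx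
    have h2 : (B *ᵥ y) ⬝ᵥ (B *ᵥ y) = 0 := by
      rw [dotProduct_mulVec, ← mulVec_transpose, hx', zero_dotProduct]
    simpa using dotProduct_self_eq_zero.mp h2
  -- finranks add to n
  have hrn : Module.finrank ℝ RB + Module.finrank ℝ KB = n := by
    have h1 := LinearMap.finrank_range_add_finrank_ker (Bᵀ.mulVecLin)
    rw [Module.finrank_fin_fun] at h1
    have hr : Module.finrank ℝ (LinearMap.range Bᵀ.mulVecLin) = Module.finrank ℝ RB := by
      show Bᵀ.rank = B.rank
      exact Matrix.rank_transpose B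
    rw [← hr]
    exact h1
  have hsup : RB ⊔ KB = ⊤ := by
    apply Submodule.eq_top_of_finrank_eq
    have h := Submodule.finrank_sup_add_finrank_inf_eq RB KB
    rw [hdisj, finrank_bot, add_zero] at h
    rw [h, hrn, Module.finrank_fin_fun]
  -- modular law: KA = RB ⊔ (KB ⊓ KA)
  have hmod : (RB ⊔ KB) ⊓ KA = RB ⊔ (KB ⊓ KA) := sup_inf_assoc_of_le KB hle
  have hKAeq : KA = RB ⊔ (KB ⊓ KA) := by rw [← hmod, hsup, top_inf_eq]
  have hd1 : Module.finrank ℝ (RB ⊓ (KB ⊓ KA) : Submodule ℝ (Fin n → ℝ)) = 0 := by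
    have hb : RB ⊓ (KB ⊓ KA) = ⊥ := by
      rw [← le_bot_iff, ← hdisj]
      exact le_inf inf_le_left (le_trans inf_le_right inf_le_left)
    rw [hb, finrank_bot]
  have hKAfin : Module.finrank ℝ KA
      = Module.finrank ℝ RB + Module.finrank ℝ (KB ⊓ KA : Submodule ℝ (Fin n → ℝ)) := by
    have h := Submodule.finrank_sup_add_finrank_inf_eq RB (KB ⊓ KA)
    rw [hd1, add_zero] at h
    conv_lhs => rw [hKAeq]
    rw [h]
  -- finrank of the comap submodule
  have hcomap : Module.finrank ℝ (Submodule.comap KA.subtype RB)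
      = Module.finrank ℝ RB :=
    (Submodule.comapSubtypeEquivOfLe hle).finrank_eq
  -- finrank of the quotient
  have hquot : Module.finrank ℝ (KA ⧸ Submodule.comap KA.subtype RB)
      + Module.finrank ℝ RB = Module.finrank ℝ KA := by
    rw [← hcomap]
    exact Submodule.finrank_quotient_add_finrank _
  have hkerfin : Module.finrank ℝ (LinearMap.ker (Aᵀ * A + B * Bᵀ).mulVecLin)
      = Module.finrank ℝ (KA ⊓ KB : Submodule ℝ (Fin n → ℝ)) := by rw [hker]
  apply FiniteDimensional.nonempty_linearEquiv_of_finrank_eq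
  rw [hkerfin, inf_comm]
  omega
end
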